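/- In the tabular softmax trajectory model, fix ε > 0, nonnegative sampling weights w : 𝒜^T → ℝ, per-token advantages A : 𝒜^T × {1, …, T} → ℝ, and old-policy probabilities q : 𝒮 × 𝒜 → ℝ with q(s,a) > 0 for all (s,a). For logits z : 𝒮 × 𝒜 → ℝ define the importance ratios ρ_t(z, y) = π_z(a_t | s_t(y)) / q(s_t(y), a_t) and the clipped surrogate loss ℒ(z) = Σ_{y ∈ 𝒜^T} w(y) Σ_{t=1}^T min(ρ_t(z,y)·A(y,t), clip_ε(ρ_t(z,y))·A(y,t)). Suppose z₀ is such that ρ_t(z₀, y) ≠ 1−ε and ρ_t(z₀, y) ≠ 1+ε for every y with w(y) ≠ 0 and every 1 ≤ t ≤ T. Then ℒ is differentiable at z₀, and for each (s,a) ∈ 𝒮 × 𝒜 its partial derivative with respect to the coordinate z(s,a) equals Σ_{y ∈ 𝒜^T} w(y) Σ_{t=1}^T m(y,t)·A(y,t)·ρ_t(z₀,y)·1{s_t(y) = s}·(1{a_t = a} − π_{z₀}(a | s)), where m(y,t) = 0 if (A(y,t) ≥ 0 and ρ_t(z₀,y) > 1+ε) or (A(y,t) ≤ 0 and ρ_t(z₀,y)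 < 1−ε), and m(y,t) = 1 otherwise. -/

import Mathlib

/-!
Away from the kinks `ρ = 1 ± ε`, each clipped term `min (ρ A) (clip ε ρ · A)` coincides near
`ρ₀` either with the constant `clip ε ρ₀ · A` (clip active) or with `ρ A`, so its derivative in
`ρ` is `m · A`. The chain rule with the softmax derivative
`∂π_z(b | s') / ∂z(s,a) = π_z(b | s') · 1{s' = s} · (1{b = a} - π_z(a | s))` gives the formula;
trajectories of weight zero contribute nothing, whether or not their terms are differentiable.
-/

open Finset Filter Asymptotics

noncomputable section

/-- Softmax policy: probability of action `a` in state `s` under logits `z`. -/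
def pol {S A : Type*} [Fintype A] (z : S × A → ℝ) (s : S) (a : A) : ℝ :=
  Real.exp (z (s, a)) / ∑ b : A, Real.exp (z (s, b))

/-- State reached after `n` steps of the deterministic dynamics `δ` from `s0`,
taking actions `y 0, y 1, …`. -/
def stateAt {S A : Type*} (δ : S → A → S) (s0 : S) (y : ℕ → A) : ℕ → S
  | 0 => s0
  | n + 1 => δ (stateAt δ s0 y n) (y n)

/-- State `s_t(y)` from which the `t`-th action of the trajectory `y` is taken. -/
def st {S A : Type*} (δ : S → A → S) (s0 : S) {T : ℕ} (y : Fin T → A) (t : Fin T) : S :=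
  stateAt δ s0 (fun n => if h : n < T then y ⟨n, h⟩ else y t) t.val

/-- Trajectory probability `P_z(y) = ∏_t π_z(a_t | s_t(y))`. -/
def traj {S A : Type*} [Fintype A] (δ : S → A → S) (s0 : S) {T : ℕ}
    (z : S × A → ℝ) (y : Fin T → A) : ℝ :=
  ∏ t : Fin T, pol z (st δ s0 y t) (y t)

/-- Per-token negative log-likelihood `ℓ_z(y)`. -/
def nll {S A : Type*} [Fintype A] (δ : S → A → S) (s0 : S) {T : ℕ}
    (z : S × A → ℝ) (y : Fin T → A) : ℝ :=
  -(1 / (T : ℝ)) * ∑ t : Fin T, Real.log (pol z (st δ s0 y t) (y t))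

/-- Centered direction `ṽ_z(s,a) = v(s,a) − ∑_b π_z(b|s) v(s,b)`. -/
def centered {S A : Type*} [Fintype A] (z v : S × A → ℝ) (s : S) (a : A) : ℝ :=
  v (s, a) - ∑ b : A, pol z s b * v (s, b)

/-- Trajectory score `Ψ_{z,v}(y) = ∑_t ṽ_z(s_t(y), a_t)`. -/
def score {S A : Type*} [Fintype A] (δ : S → A → S) (s0 : S) {T : ℕ}
    (z v : S × A → ℝ) (y : Fin T → A) : ℝ :=
  ∑ t : Fin T, centered z v (st δ s0 y t) (y t)

/-- Conditional expectation `E_{P_z}[f | E]`. -/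
def condExp {S A : Type*} [Fintype A] (δ : S → A → S) (s0 : S) {T : ℕ}
    (z : S × A → ℝ) (E : Finset (Fin T → A)) (f : (Fin T → A) → ℝ) : ℝ :=
  (∑ y ∈ E, traj δ s0 z y * f y) / ∑ y ∈ E, traj δ s0 z y

/-- Conditional covariance `Cov_{P_z(·|E)}(f, g)`. -/
def condCov {S A : Type*} [Fintype A] (δ : S → A → S) (s0 : S) {T : ℕ}
    (z : S × A → ℝ) (E : Finset (Fin T → A)) (f g : (Fin T → A) → ℝ) : ℝ :=
  condExp δ s0 z E (fun y => f y * g y) - condExp δ s0 z E f * condExp δ s0 z E g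

/-- PPO clipping function `clip_ε(x) = min(max(x, 1−ε), 1+ε)`. -/
def clip (ε x : ℝ) : ℝ := min (max x (1 - ε)) (1 + ε)

/-- Importance ratio `ρ_t(z, y) = π_z(a_t | s_t(y)) / q(s_t(y), a_t)`. -/
def ratio {S A : Type*} [Fintype A] (δ : S → A → S) (s0 : S) {T : ℕ}
    (q : S × A → ℝ) (z : S × A → ℝ) (y : Fin T → A) (t : Fin T) : ℝ :=
  pol z (st δ s0 y t) (y t) / q (st δ s0 y t, y t)

/-- Clipped surrogate loss
`ℒ(z) = ∑_y w(y) ∑_t min(ρ_t(z,y)·A(y,t), clip_ε(ρ_t(z,y))·A(y,t))`. -/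
def surrogate {S A : Type*} [Fintype A] (δ : S → A → S) (s0 : S) {T : ℕ}
    (ε : ℝ) (w : (Fin T → A) → ℝ) (Adv : (Fin T → A) → Fin T → ℝ)
    (q : S × A → ℝ) (z : S × A → ℝ) : ℝ :=
  ∑ y : Fin T → A, w y * ∑ t : Fin T,
    min (ratio δ s0 q z y t * Adv y t) (clip ε (ratio δ s0 q z y t) * Adv y t)

/-- Clipping mask `m(y,t)`: `0` when the clip is active, `1` otherwise. -/
def mask {S A : Type*} [Fintype A] (δ : S → A → S) (s0 : S) {T : ℕ}
    (ε : ℝ) (Adv : (Fin T → A) → Fin T → ℝ) (q : S × A → ℝ) (z : S × A → ℝ)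
    (y : Fin T → A) (t : Fin T) : ℝ :=
  if (0 ≤ Adv y t ∧ 1 + ε < ratio δ s0 q z y t)
      ∨ (Adv y t ≤ 0 ∧ ratio δ s0 q z y t < 1 - ε)
  then 0 else 1

def clipMask (ε Adv ρ : ℝ) : ℝ :=
  if (0 ≤ Adv ∧ 1 + ε < ρ) ∨ (Adv ≤ 0 ∧ ρ < 1 - ε) then 0 else 1

def clippedTerm (ε Adv ρ : ℝ) : ℝ :=
  min (ρ * Adv) (clip ε ρ * Adv)

section ClippedTerm

variable {ε Adv ρ₀ : ℝ}

lemma clip_of_lt (hε : 0 ≤ ε) {ρ : ℝ} (h : ρ < 1 - ε) : clip ε ρ = 1 - ε := by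
  rw [clip, max_eq_right h.le, min_eq_left (by linarith)]

lemma clip_of_gt {ρ : ℝ} (h : 1 + ε < ρ) : clip ε ρ = 1 + ε :=
  min_eq_right (h.le.trans (le_max_left _ _))

lemma le_clip {ρ : ℝ} (h : ρ ≤ 1 + ε) : ρ ≤ clip ε ρ :=
  le_min (le_max_left _ _) h

lemma clip_le {ρ : ℝ} (h : 1 - ε ≤ ρ) : clip ε ρ ≤ ρ := by
  rw [clip, max_eq_left h]
  exact min_le_left _ _

lemma clippedTerm_eventuallyEq_const (hε : 0 ≤ ε)
    (hact : (0 ≤ Adv ∧ 1 + ε < ρ₀) ∨ (Adv ≤ 0 ∧ ρ₀ < 1 - ε)) :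
    clippedTerm ε Adv =ᶠ[nhds ρ₀] fun _ => clip ε ρ₀ * Adv := by
  rcases hact with ⟨hA, hρ₀⟩ | ⟨hA, hρ₀⟩
  · filter_upwards [eventually_gt_nhds hρ₀] with ρ hρ
    rw [clippedTerm, clip_of_gt hρ, clip_of_gt hρ₀]
    exact min_eq_right (mul_le_mul_of_nonneg_right hρ.le hA)
  · filter_upwards [eventually_lt_nhds hρ₀] with ρ hρ
    rw [clippedTerm, clip_of_lt hε hρ, clip_of_lt hε hρ₀]
    exact min_eq_right (mul_le_mul_of_nonpos_right hρ.le hA)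

lemma clippedTerm_eventuallyEq_mul (h₁ : ρ₀ ≠ 1 - ε) (h₂ : ρ₀ ≠ 1 + ε)
    (hact : ¬((0 ≤ Adv ∧ 1 + ε < ρ₀) ∨ (Adv ≤ 0 ∧ ρ₀ < 1 - ε))) :
    clippedTerm ε Adv =ᶠ[nhds ρ₀] fun ρ => ρ * Adv := by
  push Not at hact
  obtain ⟨hup, hlow⟩ := hact
  rcases lt_trichotomy Adv 0 with hA | rfl | hA
  · filter_upwards [eventually_gt_nhds ((hlow hA.le).lt_of_ne h₁.symm)] with ρ hρ
    exact min_eq_left (mul_le_mul_of_nonpos_right (clip_le hρ.le) hA.le)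
  · exact .of_forall fun ρ => by simp [clippedTerm]
  · filter_upwards [eventually_lt_nhds ((hup hA.le).lt_of_ne h₂)] with ρ hρ
    exact min_eq_left (mul_le_mul_of_nonneg_right (le_clip hρ.le) hA.le)

lemma hasDerivAt_clippedTerm (hε : 0 ≤ ε) (h₁ : ρ₀ ≠ 1 - ε) (h₂ : ρ₀ ≠ 1 + ε) :
    HasDerivAt (clippedTerm ε Adv) (clipMask ε Adv ρ₀ * Adv) ρ₀ := by
  unfold clipMask
  split_ifs with hact
  · simpa using (hasDerivAt_const ρ₀ _).congr_of_eventuallyEq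
      (clippedTerm_eventuallyEq_const hε hact)
  · simpa using (hasDerivAt_mul_const Adv).congr_of_eventuallyEq
      (clippedTerm_eventuallyEq_mul h₁ h₂ hact)

end ClippedTerm

section Softmax

variable {S A : Type*} [Fintype A] [Nonempty A]

lemma sum_exp_pos (z : S × A → ℝ) (s : S) : 0 < ∑ b : A, Real.exp (z (s, b)) := by
  positivity

lemma differentiableAt_pol [Fintype S] (s : S) (b : A) (z₀ : S × A → ℝ) :
    DifferentiableAt ℝ (fun z : S × A → ℝ => pol z s b) z₀ := by
  unfold pol
  fun_prop (disch := exact (sum_exp_pos _ _).ne')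

lemma hasDerivAt_pol_update [Fintype S] [DecidableEq S] [DecidableEq A] (z₀ : S × A → ℝ)
    (s s' : S) (a b : A) :
    HasDerivAt (fun u : ℝ => pol (Function.update z₀ (s, a) u) s' b)
      (pol z₀ s' b * (if s' = s then (1 : ℝ) else 0)
        * ((if b = a then (1 : ℝ) else 0) - pol z₀ s a))
      (z₀ (s, a)) := by
  have hcoord (c : A) :=
    hasDerivAt_pi.mp (hasDerivAt_update z₀ (s, a) (z₀ (s, a))) (s', c)
  have hexp (c : A) := (hcoord c).exp
  have hquot := (hexp b).fun_div (HasDerivAt.fun_sum fun c _ => hexp c)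
    (by simpa using (sum_exp_pos z₀ s').ne')
  unfold pol
  refine hquot.congr_deriv ?_
  rw [Function.update_eq_self]
  by_cases hs : s' = s
  · subst hs
    have hZ := (sum_exp_pos z₀ s').ne'
    simp only [Pi.single_apply, Prod.mk.injEq, true_and, mul_ite, mul_one, mul_zero,
      sum_ite_eq', mem_univ, if_true]
    field_simp
    split_ifs with hba
    · subst hba; ring
    · ring
  · simp [hs]

lemma differentiableAt_ratio [Fintype S] (δ : S → A → S) (s0 : S) {T : ℕ} (q z₀ : S × A → ℝ)
    (y : Fin T → A) (t : Fin T) :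
    DifferentiableAt ℝ (fun z : S × A → ℝ => ratio δ s0 q z y t) z₀ := by
  simpa only [ratio, div_eq_mul_inv] using (differentiableAt_pol _ _ z₀).mul_const _

lemma hasDerivAt_ratio_update [Fintype S] [DecidableEq S] [DecidableEq A] (δ : S → A → S)
    (s0 : S) {T : ℕ} (q z₀ : S × A → ℝ) (s : S) (a : A) (y : Fin T → A) (t : Fin T) :
    HasDerivAt (fun u : ℝ => ratio δ s0 q (Function.update z₀ (s, a) u) y t)
      (ratio δ s0 q z₀ y t * (if st δ s0 y t = s then (1 : ℝ) else 0)
        * ((if y t = a then (1 : ℝ) else 0) - pol z₀ s a))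
      (z₀ (s, a)) := by
  refine ((hasDerivAt_pol_update z₀ s _ a _).div_const _).congr_deriv ?_
  rw [ratio]
  ring

end Softmax

section WeightedSum

variable {ι : Type*} (s : Finset ι) (w : ι → ℝ)

lemma hasDerivAt_weightedSum {f : ι → ℝ → ℝ} {f' : ι → ℝ} {x : ℝ}
    (hf : ∀ i ∈ s, w i ≠ 0 → HasDerivAt (f i) (f' i) x) :
    HasDerivAt (fun u => ∑ i ∈ s, w i * f i u) (∑ i ∈ s, w i * f' i) x := by
  refine HasDerivAt.fun_sum fun i hi => ?_
  by_cases hw : w i = 0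
  · simpa [hw] using hasDerivAt_const x (0 : ℝ)
  · exact (hf i hi hw).const_mul (w i)

lemma differentiableAt_weightedSum {E : Type*} [NormedAddCommGroup E] [NormedSpace ℝ E]
    {f : ι → E → ℝ} {x : E} (hf : ∀ i ∈ s, w i ≠ 0 → DifferentiableAt ℝ (f i) x) :
    DifferentiableAt ℝ (fun z => ∑ i ∈ s, w i * f i z) x := by
  refine DifferentiableAt.fun_sum fun i hi => ?_
  by_cases hw : w i = 0
  · simp [hw]
  · exact (hf i hi hw).const_mul (w i)

end WeightedSum

theorem stmt_14_general {S A : Type*} [Fintype S] [Fintype A] [Nonempty A]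
    [DecidableEq S] [DecidableEq A]
    (δ : S → A → S) (s0 : S) (T : ℕ)
    (ε : ℝ) (hε : 0 < ε)
    (w : (Fin T → A) → ℝ)
    (Adv : (Fin T → A) → Fin T → ℝ)
    (q : S × A → ℝ)
    (z₀ : S × A → ℝ)
    (hρ : ∀ y, w y ≠ 0 → ∀ t : Fin T,
      ratio δ s0 q z₀ y t ≠ 1 - ε ∧ ratio δ s0 q z₀ y t ≠ 1 + ε) :
    DifferentiableAt ℝ (surrogate δ s0 ε w Adv q) z₀
    ∧ ∀ (s : S) (a : A),
      HasDerivAt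
        (fun u : ℝ => surrogate δ s0 ε w Adv q (Function.update z₀ (s, a) u))
        (∑ y : Fin T → A, w y * ∑ t : Fin T,
          mask δ s0 ε Adv q z₀ y t * Adv y t * ratio δ s0 q z₀ y t
            * (if st δ s0 y t = s then (1 : ℝ) else 0)
            * ((if y t = a then (1 : ℝ) else 0) - pol z₀ s a))
        (z₀ (s, a)) := by
  -- `mask` is `clipMask` at `ρ = ratio`, and `surrogate` sums `clippedTerm ∘ ratio`, both by `rfl`.
  have hterm (y : Fin T → A) (hy : w y ≠ 0) (t : Fin T) :
      HasDerivAt (clippedTerm ε (Adv y t)) (mask δ s0 ε Adv q z₀ y t * Adv y t)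
        (ratio δ s0 q z₀ y t) :=
    hasDerivAt_clippedTerm hε.le (hρ y hy t).1 (hρ y hy t).2
  refine ⟨differentiableAt_weightedSum univ w fun y _ hy => DifferentiableAt.fun_sum fun t _ =>
    (hterm y hy t).differentiableAt.comp (g := clippedTerm ε (Adv y t)) z₀
      (differentiableAt_ratio δ s0 q z₀ y t), fun s a => ?_⟩
  refine (hasDerivAt_weightedSum univ w fun y _ hy => HasDerivAt.fun_sum fun t _ =>
    (hterm y hy t).comp_of_eq (z₀ (s, a)) (hasDerivAt_ratio_update δ s0 q z₀ s a y t)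
      (by rw [Function.update_eq_self])).congr_deriv ?_
  simp only [mul_assoc]

/-- Gradient of the PPO-style clipped surrogate in the tabular softmax
parametrization: `ℒ` is differentiable at `z₀`, and
`∂ℒ/∂z(s,a) = ∑_y w(y) ∑_t m(y,t)·A(y,t)·ρ_t(z₀,y)·1{s_t(y)=s}·(1{a_t=a} − π_{z₀}(a|s))`. -/
theorem stmt_14 {S A : Type*} [Fintype S] [Fintype A] [Nonempty A]
    [DecidableEq S] [DecidableEq A]
    (δ : S → A → S) (s0 : S) (T : ℕ) (hT : 1 ≤ T)
    (ε : ℝ) (hε : 0 < ε)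
    (w : (Fin T → A) → ℝ) (hw : ∀ y, 0 ≤ w y)
    (Adv : (Fin T → A) → Fin T → ℝ)
    (q : S × A → ℝ) (hq : ∀ p, 0 < q p)
    (z₀ : S × A → ℝ)
    (hρ : ∀ y, w y ≠ 0 → ∀ t : Fin T,
      ratio δ s0 q z₀ y t ≠ 1 - ε ∧ ratio δ s0 q z₀ y t ≠ 1 + ε) :
    DifferentiableAt ℝ (surrogate δ s0 ε w Adv q) z₀
    ∧ ∀ (s : S) (a : A),
      HasDerivAt
        (fun u : ℝ => surrogate δ s0 ε w Adv q (Function.update z₀ (s, a) u))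
        (∑ y : Fin T → A, w y * ∑ t : Fin T,
          mask δ s0 ε Adv q z₀ y t * Adv y t * ratio δ s0 q z₀ y t
            * (if st δ s0 y t = s then (1 : ℝ) else 0)
            * ((if y t = a then (1 : ℝ) else 0) - pol z₀ s a))
        (z₀ (s, a)) :=
  stmt_14_general δ s0 T ε hε w Adv q z₀ hρ
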